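/- Let H be a finite simple graph, and let φ and d be real-valued functions on V(H) such that φ(v) ≥ d(v) ≥ d_H(v) for every vertex v. Then there exists an independent set I of H such that ∑_{v∈V(H)} (φ(v) − d(v)) ≤ ∑_{v∈I} (d(v)+1)(φ(v) − d(v)). -/

import Mathlib

/-! Greedy choice: take a vertex `v` of maximum surplus `w = φ - d`, put it into `I` and delete its
closed neighbourhood. The deleted surplus is at most `(d_H(v) + 1) · w(v) ≤ (d(v) + 1) · w(v)`,
which is exactly what `v` contributes to the right-hand side. -/

open Classical Finset

/-- An independent set of a simple graph: no edge joins two of its vertices. -/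
def SimpleGraph.IsIndepFinset {V : Type*} (H : SimpleGraph V) (I : Finset V) : Prop :=
  ∀ v ∈ I, ∀ w ∈ I, ¬ H.Adj v w

namespace SimpleGraph

variable {V : Type*} (H : SimpleGraph V)

lemma isIndepFinset_empty : H.IsIndepFinset ∅ := by
  simp [IsIndepFinset]

variable {H} in
lemma IsIndepFinset.insert {I : Finset V} {v : V} (hI : H.IsIndepFinset I)
    (hv : ∀ u ∈ I, ¬ H.Adj v u) : H.IsIndepFinset (insert v I) := by
  intro a ha b hb hab
  rcases mem_insert.1 ha with rfl | haI <;> rcases mem_insert.1 hb with rfl | hbI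
  · exact H.irrefl hab
  · exact hv b hbI hab
  · exact hv a haI hab.symm
  · exact hI a haI b hbI hab

variable [Fintype V]

lemma card_filter_eq_or_adj_le_degree_add_one (S : Finset V) (v : V) :
    #{u ∈ S | u = v ∨ H.Adj v u} ≤ H.degree v + 1 :=
  calc #{u ∈ S | u = v ∨ H.Adj v u}
      ≤ #(insert v (H.neighborFinset v)) :=
        card_le_card fun u hu => by simp only [mem_filter, mem_insert, mem_neighborFinset] at hu ⊢; tauto
    _ ≤ H.degree v + 1 := card_insert_le _ _

lemma exists_isIndepFinset_subset_sum_le (w c : V → ℝ) (hw : ∀ v, 0 ≤ w v)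
    (hc : ∀ v, (H.degree v : ℝ) + 1 ≤ c v) (S : Finset V) :
    ∃ I ⊆ S, H.IsIndepFinset I ∧ ∑ v ∈ S, w v ≤ ∑ v ∈ I, c v * w v := by
  induction S using Finset.strongInduction with
  | H S ih =>
  rcases S.eq_empty_or_nonempty with rfl | hS
  · exact ⟨∅, empty_subset _, H.isIndepFinset_empty, by simp⟩
  obtain ⟨v, hvS, hv_max⟩ := S.exists_max_image w hS
  set N := {u ∈ S | u = v ∨ H.Adj v u}
  have hNS : N ⊆ S := filter_subset _ _
  have hvN : v ∈ N := mem_filter.2 ⟨hvS, Or.inl rfl⟩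
  obtain ⟨I, hIS, hI, hsum⟩ := ih (S \ N) (sdiff_ssubset hNS ⟨v, hvN⟩)
  have hN_sum : ∑ u ∈ N, w u ≤ c v * w v :=
    calc ∑ u ∈ N, w u ≤ #N * w v := by
          simpa using sum_le_card_nsmul N w (w v) fun u hu => hv_max u (hNS hu)
      _ ≤ (H.degree v + 1) * w v := by
          gcongr
          · exact hw v
          · exact_mod_cast H.card_filter_eq_or_adj_le_degree_add_one S v
      _ ≤ c v * w v := mul_le_mul_of_nonneg_right (hc v) (hw v)
  have hI_N : ∀ u ∈ I, u ∉ N := fun u hu => (mem_sdiff.1 (hIS hu)).2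
  have hI_nonadj : ∀ u ∈ I, ¬ H.Adj v u := fun u hu hvu =>
    hI_N u hu (mem_filter.2 ⟨(mem_sdiff.1 (hIS hu)).1, Or.inr hvu⟩)
  refine ⟨insert v I, insert_subset hvS (hIS.trans sdiff_subset), hI.insert hI_nonadj, ?_⟩
  rw [← sum_sdiff hNS, sum_insert fun hvI => hI_N v hvI hvN]
  linarith

end SimpleGraph

/-- if φ(v) ≥ d(v) ≥ d_H(v) for all v, then there is an independent set I
with ∑_{v}(φ(v) − d(v)) ≤ ∑_{v ∈ I}(d(v)+1)(φ(v) − d(v)). -/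
theorem weighted_independent_set_surplus {V : Type*} [Fintype V] (H : SimpleGraph V)
    (φ d : V → ℝ) (hd : ∀ v, (H.degree v : ℝ) ≤ d v) (hφ : ∀ v, d v ≤ φ v) :
    ∃ I : Finset V, H.IsIndepFinset I ∧
      ∑ v, (φ v - d v) ≤ ∑ v ∈ I, (d v + 1) * (φ v - d v) := by
  obtain ⟨I, -, hI, hsum⟩ := H.exists_isIndepFinset_subset_sum_le (fun v => φ v - d v)
    (fun v => d v + 1) (fun v => sub_nonneg.2 (hφ v)) (fun v => by linarith [hd v]) univ
  exact ⟨I, hI, hsum⟩
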